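/- arXiv:1611.02639 — 2 statements merged into one kernel-verified Lean document; each statement's English description precedes it below -/
import Mathlib

section
/- Let F : ℝⁿ → ℝ be continuously differentiable and x ∈ ℝⁿ. For the straight-line path of counterfactuals γ(α) = α·x, the integrated gradient along the i-th dimension satisfies IG_i(x) = x_i · ∫₀¹ (∂F/∂x_i)(α·x) dα, and consequently ∑_{i=1}^{n} IG_i(x) = F(x) − F(0). -/
/-- For the straight-line path `γ(α) = α • x`, the integrated gradient along the
`i`-th dimension equals `x_i · ∫₀¹ (∂F/∂x_i)(α·x) dα`, and these quantities
sum to `F(x) − F(0)`. -/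
theorem integrated_gradients_straight_line_path
    {n : ℕ} (F : (Fin n → ℝ) → ℝ) (hF : ContDiff ℝ 1 F) (x : Fin n → ℝ) :
    (∀ i : Fin n,
      (∫ α in (0:ℝ)..1,
        (fderiv ℝ F (α • x)) (Pi.single i 1) * deriv (fun t : ℝ => t * x i) α)
      = x i * ∫ α in (0:ℝ)..1, (fderiv ℝ F (α • x)) (Pi.single i 1)) ∧
    (∑ i : Fin n, x i * ∫ α in (0:ℝ)..1, (fderiv ℝ F (α • x)) (Pi.single i 1))
      = F x - F 0 := by
  have hFd : Differentiable ℝ F := hF.differentiable one_ne_zero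
  -- continuity of α ↦ fderiv ℝ F (α • x)
  have hfc : Continuous fun y : (Fin n → ℝ) => fderiv ℝ F y :=
    (hF.fderiv_right (m := 0) le_rfl).continuous
  have hpath : Continuous fun α : ℝ => α • x := (continuous_id.smul continuous_const)
  have hcont : ∀ v : Fin n → ℝ,
      Continuous fun α : ℝ => (fderiv ℝ F (α • x)) v := by
    intro v
    exact ((hfc.comp hpath).clm_apply continuous_const)
  constructor
  · intro i
    have : ∀ α : ℝ, deriv (fun t : ℝ => t * x i) α = x i := by
      intro α
      exact (hasDerivAt_mul_const (x i) (x := α)).deriv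
    simp only [this]
    rw [← intervalIntegral.integral_const_mul]
    congr 1
    ext α
    ring
  · -- derivative of g(α) = F (α • x)
    have hder : ∀ α : ℝ,
        HasDerivAt (fun t : ℝ => F (t • x)) ((fderiv ℝ F (α • x)) x) α := by
      intro α
      have h1 : HasDerivAt (fun t : ℝ => t • x) x α := by
        simpa using (hasDerivAt_id α).smul_const x
      exact (hFd (α • x)).hasFDerivAt.comp_hasDerivAt α h1
    have hint : IntervalIntegrable (fun α : ℝ => (fderiv ℝ F (α • x)) x)
        MeasureTheory.volume 0 1 := (hcont x).intervalIntegrable 0 1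
    have key : (∫ α in (0:ℝ)..1, (fderiv ℝ F (α • x)) x) = F x - F 0 := by
      have := intervalIntegral.integral_eq_sub_of_hasDerivAt
        (f := fun t : ℝ => F (t • x)) (fun t _ => hder t) hint
      simpa using this
    rw [← key]
    have hexp : ∀ α : ℝ, (fderiv ℝ F (α • x)) x
        = ∑ i : Fin n, x i * (fderiv ℝ F (α • x)) (Pi.single i 1) := by
      intro α
      have hx : x = ∑ i : Fin n, x i • (Pi.single i 1 : Fin n → ℝ) := by
        ext j
        simp [Pi.single_apply, Finset.sum_apply, mul_comm]
      have h2 : (fderiv ℝ F (α • x)) x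
          = (fderiv ℝ F (α • x)) (∑ i : Fin n, x i • (Pi.single i 1 : Fin n → ℝ)) := by
        rw [← hx]
      rw [h2]
      simp [smul_eq_mul]
    simp only [hexp]
    rw [intervalIntegral.integral_finset_sum]
    · exact Finset.sum_congr rfl fun i _ => by
        rw [intervalIntegral.integral_const_mul]
    · intro i _
      exact (continuous_const.mul (hcont (Pi.single i 1))).intervalIntegrable 0 1
end

section
/- Let F : ℝⁿ → ℝ be continuously differentiable with F(0) = 0 (the prediction at the baseline is zero), and let x ∈ ℝⁿ. Then the integrated gradients along the straight-line path γ(α) = α·x form an exact attribution of the prediction: ∑_{i=1}^{n} x_i · ∫₀¹ (∂F/∂x_i)(α·x) dα = F(x). -/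
/-- If the baseline prediction is zero, integrated gradients along the
straight-line path form an exact attribution of the prediction:
`∑ i, x_i · ∫₀¹ (∂F/∂x_i)(α·x) dα = F(x)`. -/
theorem integrated_gradients_exact_attribution
    {n : ℕ} (F : (Fin n → ℝ) → ℝ) (hF : ContDiff ℝ 1 F)
    (hF0 : F 0 = 0) (x : Fin n → ℝ) :
    (∑ i : Fin n, x i * ∫ α in (0:ℝ)..1, (fderiv ℝ F (α • x)) (Pi.single i 1))
      = F x := by
  have hdiff : Differentiable ℝ F := hF.differentiable one_ne_zero
  have hcont : Continuous (fun y => fderiv ℝ F y) :=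
    (hF.fderiv_right (m := 0) le_rfl).continuous
  have hci : ∀ i : Fin n, Continuous (fun α : ℝ => (fderiv ℝ F (α • x)) (Pi.single i 1)) := by
    intro i
    exact ((hcont.comp (continuous_id.smul continuous_const)).clm_apply continuous_const)
  have hstep : ∀ i : Fin n,
      x i * ∫ α in (0:ℝ)..1, (fderiv ℝ F (α • x)) (Pi.single i 1)
        = ∫ α in (0:ℝ)..1, x i * (fderiv ℝ F (α • x)) (Pi.single i 1) := by
    intro i
    rw [intervalIntegral.integral_const_mul]
  rw [Finset.sum_congr rfl fun i _ => hstep i,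
    ← intervalIntegral.integral_finset_sum (f := fun i α => x i * (fderiv ℝ F (α • x)) (Pi.single i 1))
      (fun i _ => (continuous_const.mul (hci i)).intervalIntegrable 0 1)]
  have hx : ∀ α : ℝ, (∑ i : Fin n, x i * (fderiv ℝ F (α • x)) (Pi.single i 1))
      = (fderiv ℝ F (α • x)) x := by
    intro α
    have : x = ∑ i : Fin n, x i • (Pi.single i 1 : Fin n → ℝ) := by
      ext j
      simp [Finset.sum_apply, Pi.single_apply, mul_comm]
    rw [show (fderiv ℝ F (α • x)) x
        = (fderiv ℝ F (α • x)) (∑ i : Fin n, x i • (Pi.single i 1 : Fin n → ℝ)) from by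
      rw [← this], map_sum]
    simp [smul_eq_mul]
  simp_rw [hx]
  have hderiv : ∀ α ∈ Set.uIcc (0:ℝ) 1,
      HasDerivAt (fun t : ℝ => F (t • x)) ((fderiv ℝ F (α • x)) x) α := by
    intro α _
    have h1 : HasDerivAt (fun t : ℝ => t • x) x α := by
      simpa using (hasDerivAt_id α).smul_const x
    exact (hdiff (α • x)).hasFDerivAt.comp_hasDerivAt α h1
  rw [intervalIntegral.integral_eq_sub_of_hasDerivAt hderiv
    (((hcont.comp (continuous_id.smul continuous_const)).clm_apply
      continuous_const).intervalIntegrable 0 1)]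
  simp [hF0]
end
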